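/- arXiv:1305.6502 — 4 statements merged into one kernel-verified Lean document; each statement's English description precedes it below -/
import Mathlib

section
/- Let Ψ be a non-linear branching mechanism of infinite variation type and let u be a flow for Ψ. Then for every t > 0, lim_{λ→∞} u(t,λ)/λ = 0. -/
open MeasureTheory Set Filter Topology
open scoped ENNReal NNReal

/-- The Lévy–Khintchine shape of a branching mechanism:
`Ψ(λ) = αλ + βλ² + ∫_{(0,∞)} (e^{−λr} − 1 + λr·1_{r<1}) π(dr)`. -/
noncomputable def psiShape (a b : ℝ) (piM : Measure ℝ) (l : ℝ) : ℝ :=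
  a * l + b * l ^ 2 +
    ∫ r, (Real.exp (-l * r) - 1 + (if r < 1 then l * r else 0)) ∂piM

/-- `Ψ` is a branching mechanism with parameters `a = α`, `b = β` and Lévy measure `piM = π`:
`β ≥ 0`, `π` is carried by `(0,∞)`, `∫ (1 ∧ r²) π(dr) < ∞`, and `Ψ` has the
Lévy–Khintchine form on `[0,∞)`. -/
def IsBranchingMechanism (Ψ : ℝ → ℝ) (a b : ℝ) (piM : Measure ℝ) : Prop :=
  0 ≤ b ∧ piM (Set.Ioi (0:ℝ))ᶜ = 0 ∧
    (∫⁻ r, ENNReal.ofReal (min 1 (r ^ 2)) ∂piM) < ⊤ ∧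
    ∀ l, 0 ≤ l → Ψ l = psiShape a b piM l

/-- Non-linearity of the branching mechanism: `β > 0` or `π ≠ 0`. -/
def IsNonLinear (b : ℝ) (piM : Measure ℝ) : Prop := 0 < b ∨ piM ≠ 0

/-- Finite variation type: `β = 0` and `∫_{(0,1)} r π(dr) < ∞`. -/
def FiniteVariationType (b : ℝ) (piM : Measure ℝ) : Prop :=
  b = 0 ∧ (∫⁻ r in Set.Ioo (0:ℝ) 1, ENNReal.ofReal r ∂piM) < ⊤

/-- The drift constant `D = α + ∫_{(0,1)} r π(dr)` (finite variation cases). -/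
noncomputable def Dconst (a : ℝ) (piM : Measure ℝ) : ℝ :=
  a + ∫ r in Set.Ioo (0:ℝ) 1, r ∂piM

/-- `u` is a flow for `Ψ`: for every `λ > 0`, `u(0,λ) = λ`, `u(t,λ) > 0` and
`∂_t u(t,λ) = −Ψ(u(t,λ))` on `[0,∞)`. -/
def IsFlow (Ψ : ℝ → ℝ) (u : ℝ → ℝ → ℝ) : Prop :=
  (∀ l, 0 < l → u 0 l = l) ∧
  (∀ l, 0 < l → ∀ t, 0 ≤ t → 0 < u t l) ∧
  (∀ l, 0 < l → ∀ t, 0 ≤ t →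
    HasDerivWithinAt (fun s => u s l) (-(Ψ (u t l))) (Set.Ici 0) t)

/-!
Infinite variation makes `Ψ` superlinear. Splitting the Lévy integral at `r = 1` and keeping only
the jumps `r ∈ (0,1)` with `x r ≥ 2` gives, for `x ≥ 0`,
`Ψ(x) ≥ αx + βx² + (x/2) ∫_{r ∈ (0,1), xr ≥ 2} r π(dr) − π[1,∞)`,
and by monotone convergence the last integral increases to `∫_{(0,1)} r π(dr) = ∞` when `β = 0`.
Hence for every `M` there is `x₀ > 0` with `Ψ(x) ≥ M x` on `[x₀, ∞)`, and comparing the flow with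
the barrier `x₀ + λ e^{-Ms}` gives `u(t,λ) ≤ x₀ + λ e^{-Mt}`, so `limsup u(t,λ)/λ ≤ e^{-Mt}`.
-/

lemma exp_neg_sub_one_add_le_sq {y : ℝ} (hy : 0 ≤ y) : Real.exp (-y) - 1 + y ≤ y ^ 2 := by
  rcases le_or_gt y 1 with hy1 | hy1
  · have := abs_le.1 (Real.abs_exp_sub_one_sub_id_le (x := -y) (by rwa [abs_neg, abs_of_nonneg hy]))
    nlinarith
  · nlinarith [Real.exp_le_one_iff.2 (neg_nonpos.2 hy)]

namespace BranchingMechanism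

open Real

noncomputable def levyIntegrand (l r : ℝ) : ℝ := exp (-l * r) - 1 + (if r < 1 then l * r else 0)

/-- Jump sizes `r ∈ (0,1)` with `x r ≥ 2`: there `e^{-xr} - 1 + xr ≥ xr - 1 ≥ xr / 2`. -/
def bigJumps (x : ℝ) : Set ℝ := Ioo 0 1 ∩ {r | 2 ≤ x * r}

lemma measurableSet_bigJumps (x : ℝ) : MeasurableSet (bigJumps x) :=
  measurableSet_Ioo.inter (measurableSet_le measurable_const (measurable_id.const_mul x))

lemma monotone_bigJumps : Monotone bigJumps := fun _ _ hxy _ ⟨hr, hxr⟩ =>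
  ⟨hr, hxr.trans (mul_le_mul_of_nonneg_right hxy hr.1.le)⟩

lemma iUnion_bigJumps : ⋃ x, bigJumps x = Ioo 0 1 := by
  refine subset_antisymm (iUnion_subset fun x => inter_subset_left) fun r hr => ?_
  exact mem_iUnion.2 ⟨2 / r, hr, (div_mul_cancel₀ 2 hr.1.ne').ge⟩

lemma measurable_levyIntegrand (l : ℝ) : Measurable (levyIntegrand l) :=
  ((measurable_exp.comp (measurable_id.const_mul (-l))).sub measurable_const).add
    (Measurable.ite measurableSet_Iio (measurable_id.const_mul l) measurable_const)

lemma abs_levyIntegrand_le {l r : ℝ} (hl : 0 ≤ l) (hr : 0 < r) :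
    |levyIntegrand l r| ≤ (l ^ 2 + 1) * min 1 (r ^ 2) := by
  have hexp_le : exp (-l * r) ≤ 1 := exp_le_one_iff.2 (by nlinarith)
  rcases lt_or_ge r 1 with hr1 | hr1
  · have hlow := add_one_le_exp (-l * r)
    have hup := exp_neg_sub_one_add_le_sq (mul_nonneg hl hr.le)
    rw [min_eq_right (by nlinarith), levyIntegrand, if_pos hr1, abs_le]
    rw [neg_mul_eq_neg_mul] at hup
    constructor <;> nlinarith [sq_nonneg r]
  · rw [min_eq_left (by nlinarith), levyIntegrand, if_neg (not_lt.2 hr1), abs_le]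
    constructor <;> nlinarith [exp_pos (-l * r), sq_nonneg l]

variable {piM : Measure ℝ}

lemma integrable_min_one_sq (hfin : ∫⁻ r, ENNReal.ofReal (min 1 (r ^ 2)) ∂piM < ⊤) :
    Integrable (fun r => min 1 (r ^ 2)) piM := by
  refine ⟨(measurable_const.min (measurable_id.pow_const 2)).aestronglyMeasurable, ?_⟩
  rwa [hasFiniteIntegral_iff_ofReal (Eventually.of_forall fun r => by positivity)]

lemma measure_Ici_one_lt_top (hfin : ∫⁻ r, ENNReal.ofReal (min 1 (r ^ 2)) ∂piM < ⊤) :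
    piM (Ici 1) < ⊤ := by
  refine lt_of_le_of_lt ?_ hfin
  calc piM (Ici 1) = ∫⁻ _ in Ici (1 : ℝ), 1 ∂piM := (setLIntegral_one _).symm
    _ ≤ ∫⁻ r in Ici (1 : ℝ), ENNReal.ofReal (min 1 (r ^ 2)) ∂piM :=
        setLIntegral_mono' measurableSet_Ici fun r hr => by
          rw [min_eq_left (one_le_pow₀ (mem_Ici.1 hr)), ENNReal.ofReal_one]
    _ ≤ _ := setLIntegral_le_lintegral _ _

lemma integrable_levyIntegrand (hsupp : piM (Ioi 0)ᶜ = 0)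
    (hfin : ∫⁻ r, ENNReal.ofReal (min 1 (r ^ 2)) ∂piM < ⊤) {l : ℝ} (hl : 0 ≤ l) :
    Integrable (levyIntegrand l) piM := by
  refine ((integrable_min_one_sq hfin).const_mul (l ^ 2 + 1)).mono'
    (measurable_levyIntegrand l).aestronglyMeasurable ?_
  filter_upwards [mem_ae_iff.2 hsupp] with r hr
  exact abs_levyIntegrand_le hl hr

lemma setLIntegral_bigJumps_lt_top (hfin : ∫⁻ r, ENNReal.ofReal (min 1 (r ^ 2)) ∂piM < ⊤)
    {x : ℝ} (hx : 0 ≤ x) : ∫⁻ r in bigJumps x, ENNReal.ofReal r ∂piM < ⊤ := by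
  calc ∫⁻ r in bigJumps x, ENNReal.ofReal r ∂piM
      ≤ ∫⁻ r in bigJumps x, ENNReal.ofReal (x / 2) * ENNReal.ofReal (min 1 (r ^ 2)) ∂piM := by
        refine setLIntegral_mono' (measurableSet_bigJumps x) fun r ⟨⟨hr0, hr1⟩, hxr⟩ => ?_
        rw [← ENNReal.ofReal_mul (by positivity), min_eq_right (by nlinarith)]
        exact ENNReal.ofReal_le_ofReal (by nlinarith [show 2 ≤ x * r from hxr])
    _ ≤ ∫⁻ r, ENNReal.ofReal (x / 2) * ENNReal.ofReal (min 1 (r ^ 2)) ∂piM :=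
        setLIntegral_le_lintegral _ _
    _ < ⊤ := by
        rw [lintegral_const_mul' _ _ ENNReal.ofReal_ne_top]
        exact ENNReal.mul_lt_top ENNReal.ofReal_lt_top hfin

lemma tendsto_setLIntegral_bigJumps
    (hdiv : ∫⁻ r in Ioo 0 1, ENNReal.ofReal r ∂piM = ⊤) :
    Tendsto (fun x => ∫⁻ r in bigJumps x, ENNReal.ofReal r ∂piM) atTop (𝓝 ⊤) := by
  have := tendsto_measure_iUnion_atTop (μ := piM.withDensity fun r => ENNReal.ofReal r)
    monotone_bigJumps
  rw [iUnion_bigJumps, withDensity_apply _ measurableSet_Ioo, hdiv] at this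
  exact this.congr fun x => withDensity_apply _ (measurableSet_bigJumps x)

lemma tendsto_setIntegral_bigJumps_atTop
    (hfin : ∫⁻ r, ENNReal.ofReal (min 1 (r ^ 2)) ∂piM < ⊤)
    (hdiv : ∫⁻ r in Ioo 0 1, ENNReal.ofReal r ∂piM = ⊤) :
    Tendsto (fun x => ∫ r in bigJumps x, r ∂piM) atTop atTop := by
  have hreal : ∀ x, 0 ≤ x → ENNReal.ofReal (∫ r in bigJumps x, r ∂piM) =
      ∫⁻ r in bigJumps x, ENNReal.ofReal r ∂piM := fun x hx => by
    rw [integral_eq_lintegral_of_nonneg_ae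
        ((ae_restrict_mem (measurableSet_bigJumps x)).mono fun r hr => hr.1.1.le)
        measurable_id.aestronglyMeasurable,
      ENNReal.ofReal_toReal (setLIntegral_bigJumps_lt_top hfin hx).ne]
  refine ENNReal.tendsto_ofReal_nhds_top.1 ((tendsto_setLIntegral_bigJumps hdiv).congr' ?_)
  filter_upwards [eventually_ge_atTop 0] with x hx using (hreal x hx).symm

lemma indicator_bigJumps_le (x r : ℝ) :
    (bigJumps x).indicator (fun r => x * r / 2) r ≤ levyIntegrand x r + (Ici 1).indicator 1 r := by
  have hexp := add_one_le_exp (-x * r)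
  by_cases hS : r ∈ bigJumps x
  · have : 2 ≤ x * r := hS.2
    simp only [indicator_of_mem hS, levyIntegrand, if_pos hS.1.2,
      indicator_of_notMem (notMem_Ici.2 hS.1.2), add_zero]
    nlinarith [exp_pos (-x * r)]
  · rw [indicator_of_notMem hS]
    rcases lt_or_ge r 1 with hr1 | hr1
    · simp only [levyIntegrand, if_pos hr1, indicator_of_notMem (notMem_Ici.2 hr1)]
      nlinarith
    · simp only [levyIntegrand, if_neg (not_lt.2 hr1), indicator_of_mem (mem_Ici.2 hr1),
        Pi.one_apply]
      nlinarith [exp_pos (-x * r)]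

variable {Ψ : ℝ → ℝ} {a b : ℝ}

lemma psi_lower_bound (hbm : IsBranchingMechanism Ψ a b piM) {x : ℝ} (hx : 0 ≤ x) :
    a * x + b * x ^ 2 + x / 2 * ∫ r in bigJumps x, r ∂piM - piM.real (Ici 1) ≤ Ψ x := by
  obtain ⟨-, hsupp, hfin, hshape⟩ := hbm
  have hint := integrable_levyIntegrand hsupp hfin hx
  have hIci : Integrable ((Ici (1 : ℝ)).indicator 1) piM :=
    (integrableOn_const (C := (1 : ℝ)) (measure_Ici_one_lt_top hfin).ne).integrable_indicator
      measurableSet_Ici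
  have hjumps :
      x / 2 * ∫ r in bigJumps x, r ∂piM ≤ ∫ r, levyIntegrand x r ∂piM + piM.real (Ici 1) :=
    calc x / 2 * ∫ r in bigJumps x, r ∂piM
        = ∫ r, (bigJumps x).indicator (fun r => x * r / 2) r ∂piM := by
          rw [integral_indicator (measurableSet_bigJumps x), ← integral_const_mul]
          congr 1 with r; ring
      _ ≤ ∫ r, (levyIntegrand x r + (Ici 1).indicator 1 r) ∂piM := by
          refine integral_mono_of_nonneg (Eventually.of_forall fun r => ?_) (hint.add hIci) ?_
          · exact indicator_nonneg (fun r hr => by have := hr.1.1; positivity) r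
          · exact Eventually.of_forall (indicator_bigJumps_le x)
      _ = ∫ r, levyIntegrand x r ∂piM + piM.real (Ici 1) := by
          rw [integral_add hint hIci, integral_indicator_one measurableSet_Ici]
  rw [hshape x hx, psiShape]
  change _ ≤ a * x + b * x ^ 2 + ∫ r, levyIntegrand x r ∂piM
  linarith

theorem tendsto_psi_div_atTop (hbm : IsBranchingMechanism Ψ a b piM)
    (hiv : ¬ FiniteVariationType b piM) : Tendsto (fun x => Ψ x / x) atTop atTop := by
  set J : ℝ → ℝ := fun x => ∫ r in bigJumps x, r ∂piM
  have hJ : ∀ x, 0 ≤ J x := fun x =>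
    setIntegral_nonneg (measurableSet_bigJumps x) fun r hr => hr.1.1.le
  have hdominant : Tendsto (fun x => b * x + J x / 2) atTop atTop := by
    rcases hbm.1.lt_or_eq with hb | hb
    · exact (tendsto_id.const_mul_atTop hb).atTop_add_nonneg fun x => by
        have := hJ x; positivity
    · have hdiv : ∫⁻ r in Ioo 0 1, ENNReal.ofReal r ∂piM = ⊤ :=
        not_lt_top_iff.1 fun h => hiv ⟨hb.symm, h⟩
      simpa [← hb] using
        (tendsto_setIntegral_bigJumps_atTop hbm.2.2.1 hdiv).atTop_div_const two_pos
  have hlower : Tendsto (fun x => b * x + J x / 2 + (a - piM.real (Ici 1) / x)) atTop atTop :=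
    hdominant.atTop_add
      (by simpa using tendsto_const_nhds.sub (tendsto_const_nhds.div_atTop tendsto_id))
  refine tendsto_atTop_mono' atTop ?_ hlower
  filter_upwards [eventually_gt_atTop 0] with x hx
  rw [le_div_iff₀ hx]
  have := psi_lower_bound hbm hx.le
  have : piM.real (Ici 1) / x * x = piM.real (Ici 1) := div_mul_cancel₀ _ hx.ne'
  nlinarith

theorem exists_forall_mul_le_psi (hbm : IsBranchingMechanism Ψ a b piM)
    (hiv : ¬ FiniteVariationType b piM) (M : ℝ) : ∃ x₀ > 0, ∀ x, x₀ ≤ x → M * x ≤ Ψ x := by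
  obtain ⟨x₀, hx₀⟩ := eventually_atTop.1
    (((tendsto_psi_div_atTop hbm hiv).eventually_ge_atTop M).and (eventually_gt_atTop 0))
  refine ⟨max x₀ 1, by positivity, fun x hx => ?_⟩
  obtain ⟨hM, hx⟩ := hx₀ x (le_of_max_le_left hx)
  exact (le_div_iff₀ hx).1 hM

end BranchingMechanism

/-- Comparison with the barrier `x₀ + v(0) e^{-Ms}`: at a contact point `v ≥ x₀`, hence
`v' = -Ψ(v) ≤ -M v`, which is strictly below the barrier's slope because `M x₀ > 0`. -/
theorem le_add_mul_exp_of_hasDerivWithinAt_neg {Ψ v : ℝ → ℝ} {M x₀ : ℝ} (hM : 0 < M)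
    (hx₀ : 0 < x₀) (hΨ : ∀ x, x₀ ≤ x → M * x ≤ Ψ x) (hv₀ : 0 ≤ v 0)
    (hv : ∀ s, 0 ≤ s → HasDerivWithinAt v (-Ψ (v s)) (Ici 0) s) {t : ℝ} (ht : 0 ≤ t) :
    v t ≤ x₀ + v 0 * Real.exp (-(M * t)) := by
  have hbarrier : ∀ s, HasDerivAt (fun s => x₀ + v 0 * Real.exp (-(M * s)))
      (-(M * (v 0 * Real.exp (-(M * s))))) s := fun s => by
    have h := (((hasDerivAt_id s).const_mul (-M)).exp.const_mul (v 0)).const_add x₀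
    simp only [id, mul_one, neg_mul] at h
    exact h.congr_deriv (by ring)
  refine image_le_of_deriv_right_lt_deriv_boundary
    (fun s hs => (hv s hs.1).continuousWithinAt.mono Icc_subset_Ici_self)
    (fun s hs => (hv s hs.1).mono (Ici_subset_Ici.2 hs.1)) (by simp [hx₀.le]) hbarrier
    (fun s _ hcontact => ?_) ⟨ht, le_rfl⟩
  have hx₀v : x₀ ≤ v s := by rw [hcontact]; have := Real.exp_pos (-(M * s)); nlinarith
  have := hΨ _ hx₀v
  nlinarith

theorem csbp_infiniteVariation_ratio_limit_general
    (Ψ : ℝ → ℝ) (a b : ℝ) (piM : Measure ℝ) (u : ℝ → ℝ → ℝ)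
    (hbm : IsBranchingMechanism Ψ a b piM)
    (hiv : ¬ FiniteVariationType b piM) (hu : IsFlow Ψ u) :
    ∀ t : ℝ, 0 < t →
      Tendsto (fun l => u t l / l) atTop (𝓝 0) := by
  intro t ht
  obtain ⟨hu₀, hupos, hderiv⟩ := hu
  refine tendsto_order.2 ⟨fun c hc => ?_, fun ε hε => ?_⟩
  · filter_upwards [eventually_gt_atTop 0] with l hl
    exact hc.trans (div_pos (hupos l hl t ht.le) hl)
  obtain ⟨M, hMε, hM⟩ : ∃ M, Real.exp (-(M * t)) < ε ∧ 0 < M :=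
    (((Real.tendsto_exp_neg_atTop_nhds_zero.comp (tendsto_id.atTop_mul_const ht)).eventually
      (gt_mem_nhds hε)).and (eventually_gt_atTop 0)).exists
  obtain ⟨x₀, hx₀, hΨ⟩ := BranchingMechanism.exists_forall_mul_le_psi hbm hiv M
  have hrest : Tendsto (fun l => x₀ / l + Real.exp (-(M * t))) atTop (𝓝 (Real.exp (-(M * t)))) := by
    simpa using (tendsto_const_nhds.div_atTop tendsto_id).add_const (Real.exp (-(M * t)))
  filter_upwards [hrest.eventually (gt_mem_nhds hMε), eventually_gt_atTop 0] with l hlε hl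
  have hbound := le_add_mul_exp_of_hasDerivWithinAt_neg hM hx₀ hΨ
    (hl.le.trans_eq (hu₀ l hl).symm) (fun s hs => hderiv l hl s hs) ht.le
  rw [hu₀ l hl] at hbound
  calc u t l / l ≤ (x₀ + l * Real.exp (-(M * t))) / l := by gcongr
    _ = x₀ / l + Real.exp (-(M * t)) := by field_simp
    _ < ε := hlε

/-- for a non-linear branching mechanism of infinite variation type and any
flow `u` for it, `u(t,λ)/λ → 0` as `λ → ∞`, for every `t > 0`. -/
theorem csbp_infiniteVariation_ratio_limit
    (Ψ : ℝ → ℝ) (a b : ℝ) (piM : Measure ℝ) (u : ℝ → ℝ → ℝ)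
    (hbm : IsBranchingMechanism Ψ a b piM) (hnl : IsNonLinear b piM)
    (hiv : ¬ FiniteVariationType b piM) (hu : IsFlow Ψ u) :
    ∀ t : ℝ, 0 < t →
      Tendsto (fun l => u t l / l) atTop (𝓝 0) :=
  csbp_infiniteVariation_ratio_limit_general Ψ a b piM u hbm hiv hu
end

section
/- Let Ψ be a non-linear branching mechanism of infinite variation type, let u be a flow for Ψ, and let (p_t) be a CSBP(Ψ) transition family. For each t > 0 let ν_t be a Borel measure on (0,∞] with ν_t({∞}) < ∞, ∫_{(0,∞)} (1 ∧ r) ν_t(dr) < ∞, and u(t,λ) = ∫_{(0,∞]} (1 − e^{−λr}) ν_t(dr) for all λ > 0 (with the convention e^{−λ·∞} = 0). Then for all s, t > 0 and every Borel set A ⊆ (0,∞], ν_{t+s}(A) = ∫_{(0,∞]} p_t(x, A) ν_s(dx). -/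
open MeasureTheory Set Filter Topology
open scoped ENNReal NNReal

/-- `p` is a CSBP(Ψ) transition family for the flow `u`: each `p t x` is a probability
measure on `[0,∞]` (modelled by `ℝ≥0∞`), with Laplace transform over the finite part
`exp(−x u(t,λ))` for finite `x`, and `p t ∞ = δ_∞`. -/
def IsCSBPTransition (u : ℝ → ℝ → ℝ) (p : ℝ → ℝ≥0∞ → Measure ℝ≥0∞) : Prop :=
  (∀ t : ℝ, 0 ≤ t → ∀ x : ℝ≥0∞, IsProbabilityMeasure (p t x)) ∧
  (∀ t : ℝ, 0 ≤ t → ∀ x : ℝ≥0∞, x ≠ ⊤ → ∀ l : ℝ, 0 < l →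
    (∫⁻ z in {(⊤ : ℝ≥0∞)}ᶜ, ENNReal.ofReal (Real.exp (-l * z.toReal)) ∂(p t x)) =
      ENNReal.ofReal (Real.exp (-(x.toReal) * u t l))) ∧
  (∀ t : ℝ, 0 ≤ t → p t ⊤ = Measure.dirac ⊤)

/-- `ν` is a family of Lévy measures representing the flow `u`: for each `t > 0`,
`ν t` is a measure on `(0,∞]` (modelled by `ℝ≥0∞` with no mass at `0`), with
`ν_t({∞}) < ∞`, `∫_{(0,∞)} (1 ∧ r) ν_t(dr) < ∞` and
`u(t,λ) = ∫_{(0,∞]} (1 − e^{−λr}) ν_t(dr)` (with the convention `e^{−λ·∞} = 0`). -/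
def IsLevyRep (u : ℝ → ℝ → ℝ) (ν : ℝ → Measure ℝ≥0∞) : Prop :=
  ∀ t : ℝ, 0 < t →
    ν t {0} = 0 ∧ ν t {⊤} < ⊤ ∧
    (∫⁻ r in {(⊤ : ℝ≥0∞)}ᶜ, min 1 r ∂(ν t)) < ⊤ ∧
    ∀ l : ℝ, 0 < l →
      ENNReal.ofReal (u t l) =
        ∫⁻ r, (if r = ⊤ then 1 else ENNReal.ofReal (1 - Real.exp (-l * r.toReal))) ∂(ν t)

/-!
Both sides of the identity are measures on `(0,∞]` with finite transforms
`λ ↦ ∫ (1 - e^{-λr}) m(dr)`, and such a measure is determined by its transform: weighting it by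
`1 - e^{-r}` gives a finite measure on the compact space `[0,∞]` whose Laplace transform is a
difference of two values of the transform, and a finite measure on `[0,∞]` is determined by the
integrals of the polynomials in `e^{-r}`, which are dense by Stone–Weierstrass (the same density
argument makes `x ↦ p_t(x,·)` measurable). Integrating `1 - e^{-λr}` against `p_t(x,dr)` gives
`1 - e^{-u(t,λ)x}`, so the transform of `∫ p_t(x,·) ν_s(dx)` is `u(s, u(t,λ))`. This equals
`u(t+s,λ)` because `Ψ` is convex, hence locally Lipschitz on `(0,∞)`, so solutions of the flow
equation are unique.
-/

noncomputable def levyKhintchineIntegrand (l r : ℝ) : ℝ :=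
  Real.exp (-l * r) - 1 + (if r < 1 then l * r else 0)

lemma abs_levyKhintchineIntegrand_le {l r : ℝ} (hl : 0 ≤ l) (hr : 0 < r) :
    |levyKhintchineIntegrand l r| ≤ max 1 (l ^ 2) * min 1 (r ^ 2) := by
  have hexp : Real.exp (-l * r) ≤ 1 := Real.exp_le_one_iff.mpr (by nlinarith)
  unfold levyKhintchineIntegrand
  split_ifs with hr1
  · have hlow : 0 ≤ Real.exp (-l * r) - 1 + l * r := by
      linarith [Real.add_one_le_exp (-l * r)]
    have hup : Real.exp (-l * r) - 1 + l * r ≤ (l * r) ^ 2 := by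
      rcases le_or_gt (l * r) 1 with h | h
      · have := Real.abs_exp_sub_one_sub_id_le (x := -l * r)
          (by rw [abs_le]; constructor <;> nlinarith)
        rw [abs_le] at this
        nlinarith
      · nlinarith
    rw [abs_of_nonneg hlow, min_eq_right (by nlinarith)]
    nlinarith [le_max_right 1 (l ^ 2), sq_nonneg r]
  · rw [min_eq_left (by nlinarith), mul_one, add_zero, abs_of_nonpos (by linarith)]
    linarith [Real.exp_pos (-l * r), le_max_left 1 (l ^ 2)]

lemma measurable_levyKhintchineIntegrand (l : ℝ) : Measurable (levyKhintchineIntegrand l) := by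
  unfold levyKhintchineIntegrand
  exact (by fun_prop : Measurable fun r => Real.exp (-l * r) - 1).add
    (Measurable.ite measurableSet_Iio (by fun_prop) measurable_const)

lemma integrable_levyKhintchineIntegrand {piM : Measure ℝ} (hsupp : piM (Ioi 0)ᶜ = 0)
    (hfin : ∫⁻ r, ENNReal.ofReal (min 1 (r ^ 2)) ∂piM < ⊤) {l : ℝ} (hl : 0 ≤ l) :
    Integrable (levyKhintchineIntegrand l) piM := by
  have hmin : Integrable (fun r => min 1 (r ^ 2)) piM :=
    ⟨by fun_prop, (hasFiniteIntegral_iff_ofReal (ae_of_all _ fun r =>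
      le_min zero_le_one (sq_nonneg r))).mpr hfin⟩
  refine (hmin.const_mul (max 1 (l ^ 2))).mono'
    (measurable_levyKhintchineIntegrand l).aestronglyMeasurable ?_
  filter_upwards [measure_eq_zero_iff_ae_notMem.mp hsupp] with r hr
  exact abs_levyKhintchineIntegrand_le hl (by simpa using hr)

lemma convexOn_levyKhintchineIntegrand (r : ℝ) :
    ConvexOn ℝ univ fun l => levyKhintchineIntegrand l r := by
  have hexp : ConvexOn ℝ univ fun l : ℝ => Real.exp (-l * r) := by
    have := convexOn_exp.comp_linearMap ((-r) • (LinearMap.id : ℝ →ₗ[ℝ] ℝ))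
    rw [preimage_univ] at this
    exact this.congr fun l _ => by simp [mul_comm]
  have haff : ConvexOn ℝ univ fun l : ℝ => (if r < 1 then r else 0) * l - 1 :=
    (LinearMap.mulLeft ℝ (if r < 1 then r else 0)).convexOn convex_univ |>.sub
      (concaveOn_const 1 convex_univ)
  refine (hexp.add haff).congr fun l _ => ?_
  simp only [levyKhintchineIntegrand, Pi.add_apply]
  split_ifs <;> ring

lemma convexOn_psiShape {a b : ℝ} {piM : Measure ℝ} (hb : 0 ≤ b) (hsupp : piM (Ioi 0)ᶜ = 0)
    (hfin : ∫⁻ r, ENNReal.ofReal (min 1 (r ^ 2)) ∂piM < ⊤) :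
    ConvexOn ℝ (Ici 0) (psiShape a b piM) := by
  have hlin : ConvexOn ℝ (Ici 0) fun l : ℝ => a * l :=
    (LinearMap.mulLeft ℝ a).convexOn (convex_Ici 0)
  have hsq : ConvexOn ℝ (Ici 0) fun l : ℝ => b * l ^ 2 := (convexOn_pow 2).smul hb
  have hint : ConvexOn ℝ (Ici 0) fun l => ∫ r, levyKhintchineIntegrand l r ∂piM :=
    integral_convexOn_of_integrand_ae (convex_Ici 0)
      (ae_of_all _ fun r =>
        (convexOn_levyKhintchineIntegrand r).subset (subset_univ _) (convex_Ici 0))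
      fun l hl => integrable_levyKhintchineIntegrand hsupp hfin hl
  exact (hlin.add hsq).add hint

lemma IsBranchingMechanism.locallyLipschitzOn {Ψ : ℝ → ℝ} {a b : ℝ} {piM : Measure ℝ}
    (hΨ : IsBranchingMechanism Ψ a b piM) : LocallyLipschitzOn (Ioi 0) Ψ := by
  obtain ⟨hb, hsupp, hfin, hshape⟩ := hΨ
  have hconv : ConvexOn ℝ (Ici 0) Ψ :=
    (convexOn_psiShape hb hsupp hfin).congr fun l hl => (hshape l hl).symm
  simpa using hconv.locallyLipschitzOn_interior

lemma IsFlow.apply_add {Ψ : ℝ → ℝ} {u : ℝ → ℝ → ℝ} (hΨ : LocallyLipschitzOn (Ioi 0) Ψ)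
    (hu : IsFlow Ψ u) {l t s : ℝ} (hl : 0 < l) (ht : 0 ≤ t) (hs : 0 ≤ s) :
    u (t + s) l = u s (u t l) := by
  obtain ⟨hu0, hpos, hderiv⟩ := hu
  have hutl : 0 < u t l := hpos l hl t ht
  set φ : ℝ → ℝ := fun τ => u (t + τ) l
  set ψ : ℝ → ℝ := fun τ => u τ (u t l)
  have hφ' : ∀ τ, 0 ≤ τ → HasDerivWithinAt φ (-Ψ (φ τ)) (Ici 0) τ := fun τ hτ => by
    have h := (hderiv l hl (t + τ) (by positivity)).comp τ
      ((hasDerivAt_id τ).const_add t).hasDerivWithinAt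
      fun σ (hσ : σ ∈ Ici 0) => show t + σ ∈ Ici 0 from add_nonneg ht hσ
    rwa [mul_one] at h
  have hψ' : ∀ τ, 0 ≤ τ → HasDerivWithinAt ψ (-Ψ (ψ τ)) (Ici 0) τ :=
    fun τ hτ => hderiv _ hutl τ hτ
  have hφc : ContinuousOn φ (Icc 0 s) :=
    fun τ hτ => (hφ' τ hτ.1).continuousWithinAt.mono Icc_subset_Ici_self
  have hψc : ContinuousOn ψ (Icc 0 s) :=
    fun τ hτ => (hψ' τ hτ.1).continuousWithinAt.mono Icc_subset_Ici_self
  set K := φ '' Icc 0 s ∪ ψ '' Icc 0 s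
  have hKpos : K ⊆ Ioi 0 := by
    rintro _ (⟨τ, hτ, rfl⟩ | ⟨τ, hτ, rfl⟩)
    exacts [hpos l hl _ (by linarith [hτ.1]), hpos _ hutl τ hτ.1]
  obtain ⟨C, hC⟩ := (hΨ.mono hKpos).exists_lipschitzOnWith_of_compact
    ((isCompact_Icc.image_of_continuousOn hφc).union (isCompact_Icc.image_of_continuousOn hψc))
  have hCneg : LipschitzOnWith C (fun y => -Ψ y) K :=
    LipschitzOnWith.of_dist_le_mul fun x hx y hy => by
      simpa only [dist_neg_neg] using hC.dist_le_mul x hx y hy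
  have heq := ODE_solution_unique_of_mem_Icc_right (v := fun _ y => -Ψ y) (s := fun _ => K)
    (fun _ _ => hCneg) hφc (fun τ hτ => (hφ' τ hτ.1).mono (Ici_subset_Ici.2 hτ.1))
    (fun τ hτ => Or.inl ⟨τ, Ico_subset_Icc_self hτ, rfl⟩) hψc
    (fun τ hτ => (hψ' τ hτ.1).mono (Ici_subset_Ici.2 hτ.1))
    (fun τ hτ => Or.inr ⟨τ, Ico_subset_Icc_self hτ, rfl⟩) (by simp [φ, ψ, hu0 _ hutl])
  exact heq (right_mem_Icc.2 hs)

noncomputable def expNegMul (l : ℝ) (r : ℝ≥0∞) : ℝ≥0∞ :=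
  if r = ⊤ then 0 else ENNReal.ofReal (Real.exp (-l * r.toReal))

noncomputable def oneSubExpNegMul (l : ℝ) (r : ℝ≥0∞) : ℝ≥0∞ :=
  if r = ⊤ then 1 else ENNReal.ofReal (1 - Real.exp (-l * r.toReal))

@[fun_prop]
lemma measurable_expNegMul (l : ℝ) : Measurable (expNegMul l) :=
  Measurable.ite (measurableSet_singleton ⊤) measurable_const (by fun_prop)

@[fun_prop]
lemma measurable_oneSubExpNegMul (l : ℝ) : Measurable (oneSubExpNegMul l) :=
  Measurable.ite (measurableSet_singleton ⊤) measurable_const (by fun_prop)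

lemma expNegMul_le_one {l : ℝ} (hl : 0 ≤ l) (r : ℝ≥0∞) : expNegMul l r ≤ 1 := by
  unfold expNegMul
  split_ifs
  · exact zero_le_one
  · exact ENNReal.ofReal_le_one.2 (Real.exp_le_one_iff.2 (by nlinarith [r.toReal_nonneg]))

lemma expNegMul_ne_top (l : ℝ) (r : ℝ≥0∞) : expNegMul l r ≠ ⊤ := by
  unfold expNegMul; split_ifs <;> simp

lemma expNegMul_eq_indicator (l : ℝ) :
    expNegMul l =
      ({⊤}ᶜ : Set ℝ≥0∞).indicator fun r => ENNReal.ofReal (Real.exp (-l * r.toReal)) := by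
  ext r
  by_cases hr : r = ⊤ <;> simp [expNegMul, hr]

lemma oneSubExpNegMul_eq (l : ℝ) (r : ℝ≥0∞) :
    oneSubExpNegMul l r = 1 - expNegMul l r := by
  unfold oneSubExpNegMul expNegMul
  split_ifs
  · simp
  · rw [ENNReal.ofReal_sub _ (Real.exp_pos _).le, ENNReal.ofReal_one]

lemma oneSubExpNegMul_one_pos {r : ℝ≥0∞} (hr : 0 < r) : 0 < oneSubExpNegMul 1 r := by
  unfold oneSubExpNegMul
  split_ifs with htop
  · exact one_pos
  · exact ENNReal.ofReal_pos.2 (sub_pos.2 (Real.exp_lt_one_iff.2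
      (by nlinarith [ENNReal.toReal_pos hr.ne' htop])))

lemma oneSubExpNegMul_ne_top (l : ℝ) (r : ℝ≥0∞) : oneSubExpNegMul l r ≠ ⊤ := by
  unfold oneSubExpNegMul; split_ifs <;> simp

lemma expNegMul_add (l l' : ℝ) (r : ℝ≥0∞) :
    expNegMul (l + l') r = expNegMul l r * expNegMul l' r := by
  unfold expNegMul
  split_ifs
  · simp
  · rw [← ENNReal.ofReal_mul (Real.exp_pos _).le, ← Real.exp_add]
    ring_nf

-- `n ≠ 0` matters at `r = ⊤`, where `expNegMul 0 ⊤ = 0`.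
lemma expNegMul_one_pow {n : ℕ} (hn : n ≠ 0) (r : ℝ≥0∞) :
    expNegMul 1 r ^ n = expNegMul n r := by
  obtain ⟨m, rfl⟩ := Nat.exists_eq_succ_of_ne_zero hn
  induction m with
  | zero => simp
  | succ m ih =>
    rw [pow_succ, ih m.succ_ne_zero, ← expNegMul_add]
    push_cast; ring_nf

lemma expNegMul_one_eq_exp (r : ℝ≥0∞) : expNegMul 1 r = EReal.exp (-(r : EReal)) := by
  unfold expNegMul
  split_ifs with hr
  · simp [hr]
  · lift r to ℝ≥0 using hr
    rw [EReal.coe_nnreal_eq_coe_real, ← EReal.coe_neg, EReal.exp_coe, neg_one_mul,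
      ENNReal.coe_toReal]

noncomputable def expNeg : C(ℝ≥0∞, ℝ) where
  toFun r := (expNegMul 1 r).toReal
  continuous_toFun := by
    simp_rw [expNegMul_one_eq_exp]
    exact ENNReal.continuousOn_toReal.comp_continuous
      (ENNReal.continuous_exp.comp (continuous_neg.comp continuous_coe_ennreal_ereal))
      fun r => expNegMul_one_eq_exp r ▸ expNegMul_ne_top 1 r

lemma expNeg_injective : Function.Injective expNeg := by
  intro x y h
  have h' : expNegMul 1 x = expNegMul 1 y :=
    (ENNReal.toReal_eq_toReal_iff' (expNegMul_ne_top 1 x) (expNegMul_ne_top 1 y)).1 h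
  simpa [expNegMul_one_eq_exp, EReal.exp_strictMono.injective.eq_iff] using h'

lemma ofReal_expNeg_pow {n : ℕ} (hn : n ≠ 0) (r : ℝ≥0∞) :
    ENNReal.ofReal ((expNeg ^ n) r) = expNegMul n r := by
  rw [ContinuousMap.pow_apply, ← expNegMul_one_pow hn]
  change ENNReal.ofReal ((expNegMul 1 r).toReal ^ n) = _
  rw [← ENNReal.toReal_pow, ENNReal.ofReal_toReal (ENNReal.pow_ne_top (expNegMul_ne_top 1 r))]

theorem mem_of_isClosed_of_expNeg_pow_mem {S : Submodule ℝ C(ℝ≥0∞, ℝ)}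
    (hS : IsClosed (S : Set C(ℝ≥0∞, ℝ))) (hpow : ∀ n : ℕ, expNeg ^ n ∈ S) (g : C(ℝ≥0∞, ℝ)) :
    g ∈ S := by
  set A := Algebra.adjoin ℝ {expNeg}
  have hdense : A.topologicalClosure = ⊤ :=
    ContinuousMap.subalgebra_topologicalClosure_eq_top_of_separatesPoints A
      fun x y hxy => ⟨expNeg, ⟨expNeg, Algebra.subset_adjoin rfl, rfl⟩, expNeg_injective.ne hxy⟩
  have hAS : (A : Set C(ℝ≥0∞, ℝ)) ⊆ S := by
    intro f hf
    change f ∈ Subalgebra.toSubmodule A at hf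
    rw [Algebra.adjoin_eq_span] at hf
    refine Submodule.span_le.2 ?_ hf
    rintro _ hx
    obtain ⟨n, rfl⟩ := Submonoid.mem_closure_singleton.1 hx
    exact hpow n
  have hg : g ∈ closure (A : Set C(ℝ≥0∞, ℝ)) := by
    rw [← Subalgebra.topologicalClosure_coe, hdense]; trivial
  exact hS.closure_subset_iff.2 hAS hg

section IntegralCLM

variable {X : Type*} [TopologicalSpace X] [CompactSpace X] [MeasurableSpace X]
  [OpensMeasurableSpace X]

lemma ContinuousMap.integrable (g : C(X, ℝ)) (m : Measure X) [IsFiniteMeasure m] :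
    Integrable g m :=
  (BoundedContinuousFunction.mkOfCompact g).integrable m

noncomputable def ContinuousMap.integralCLM (m : Measure X) [IsFiniteMeasure m] :
    C(X, ℝ) →L[ℝ] ℝ :=
  LinearMap.mkContinuous
    { toFun g := ∫ x, g x ∂m
      map_add' f g := integral_add (f.integrable m) (g.integrable m)
      map_smul' c g := integral_const_mul c _ }
    (m.real univ) fun g => by
      simpa [mul_comm] using norm_integral_le_of_norm_le_const (ae_of_all m g.norm_coe_le_norm)

@[simp]
lemma ContinuousMap.integralCLM_apply (m : Measure X) [IsFiniteMeasure m] (g : C(X, ℝ)) :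
    integralCLM m g = ∫ x, g x ∂m := rfl

end IntegralCLM

def measurableEvalSubmodule {α E : Type*} [MeasurableSpace α] [NormedAddCommGroup E]
    [NormedSpace ℝ E] (L : α → E →L[ℝ] ℝ) : Submodule ℝ E where
  carrier := {g | Measurable fun x => L x g}
  add_mem' {f g} hf hg := show Measurable fun x => L x (f + g) by
    simp only [map_add]; exact hf.add hg
  zero_mem' := show Measurable fun x => L x 0 by simp only [map_zero]; exact measurable_const
  smul_mem' c g hg := show Measurable fun x => L x (c • g) by
    simp only [map_smul, smul_eq_mul]; exact hg.const_mul c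

lemma isClosed_measurableEvalSubmodule {α E : Type*} [MeasurableSpace α] [NormedAddCommGroup E]
    [NormedSpace ℝ E] (L : α → E →L[ℝ] ℝ) : IsClosed (measurableEvalSubmodule L : Set E) := by
  refine isClosed_of_closure_subset fun g hg => ?_
  obtain ⟨gs, hgs, hlim⟩ := mem_closure_iff_seq_limit.1 hg
  exact measurable_of_tendsto_metrizable hgs
    (tendsto_pi_nhds.2 fun x => ((L x).continuous.tendsto g).comp hlim)

lemma integral_expNeg_pow {n : ℕ} (hn : n ≠ 0) (m : Measure ℝ≥0∞) :
    ∫ r, (expNeg ^ n) r ∂m = (∫⁻ r, expNegMul n r ∂m).toReal := by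
  rw [integral_eq_lintegral_of_nonneg_ae (ae_of_all _ fun r => by simp [expNeg])
    (expNeg ^ n).continuous.aestronglyMeasurable]
  simp_rw [ofReal_expNeg_pow hn]

lemma oneSubExpNegMul_one_mul_expNegMul {l : ℝ} (hl : 0 ≤ l) (r : ℝ≥0∞) :
    oneSubExpNegMul 1 r * expNegMul l r = oneSubExpNegMul (l + 1) r - oneSubExpNegMul l r := by
  have hl1 := expNegMul_le_one hl r
  simp only [oneSubExpNegMul_eq]
  rw [ENNReal.sub_mul fun _ _ => expNegMul_ne_top l r, one_mul, ← expNegMul_add,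
    add_comm 1 l]
  exact (ENNReal.sub_sub_sub_cancel_left ENNReal.one_ne_top hl1).symm

theorem ext_of_lintegral_expNegMul_eq {m₁ m₂ : Measure ℝ≥0∞} [IsFiniteMeasure m₁]
    [IsFiniteMeasure m₂] (huniv : m₁ univ = m₂ univ)
    (h : ∀ l : ℝ, 0 < l → ∫⁻ r, expNegMul l r ∂m₁ = ∫⁻ r, expNegMul l r ∂m₂) : m₁ = m₂ := by
  set L := ContinuousMap.integralCLM m₁ - ContinuousMap.integralCLM m₂
  have hpow (n : ℕ) : L (expNeg ^ n) = 0 := by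
    rcases eq_or_ne n 0 with rfl | hn
    · simp [L, measureReal_def, huniv]
    · simp only [L, sub_apply, ContinuousMap.integralCLM_apply,
        integral_expNeg_pow hn, h n (by positivity), sub_self]
  have hker (g : C(ℝ≥0∞, ℝ)) : L g = 0 :=
    mem_of_isClosed_of_expNeg_pow_mem L.isClosed_ker hpow g
  refine ext_of_forall_integral_eq_of_IsFiniteMeasure fun f => ?_
  simpa [L, sub_eq_zero] using hker f.toContinuousMap

theorem measurable_of_measurable_lintegral_expNegMul {α : Type*} [MeasurableSpace α]
    {κ : α → Measure ℝ≥0∞} [∀ x, IsProbabilityMeasure (κ x)]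
    (h : ∀ l : ℝ, 0 < l → Measurable fun x => ∫⁻ r, expNegMul l r ∂κ x) : Measurable κ := by
  have hpow (n : ℕ) : Measurable fun x => ∫ r, (expNeg ^ n) r ∂κ x := by
    rcases eq_or_ne n 0 with rfl | hn
    · simp
    · simp_rw [integral_expNeg_pow hn]
      exact (h n (by positivity)).ennreal_toReal
  have hcont (g : C(ℝ≥0∞, ℝ)) : Measurable fun x => ∫ r, g r ∂κ x :=
    mem_of_isClosed_of_expNeg_pow_mem
      (isClosed_measurableEvalSubmodule fun x => ContinuousMap.integralCLM (κ x)) hpow g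
  have hclosed (F : Set ℝ≥0∞) (hF : IsClosed F) : Measurable fun x => κ x F := by
    refine ENNReal.measurable_of_tendsto (fun n => ?_)
      (tendsto_pi_nhds.2 fun x => HasOuterApproxClosed.tendsto_lintegral_apprSeq hF (κ x))
    have he : (fun x => ∫⁻ r, (hF.apprSeq n r : ℝ≥0∞) ∂κ x) =
        fun x => ENNReal.ofReal (∫ r, (hF.apprSeq n r : ℝ) ∂κ x) := funext fun x => by
      rw [← BoundedContinuousFunction.toReal_lintegral_coe_eq_integral,
        ENNReal.ofReal_toReal (BoundedContinuousFunction.lintegral_lt_top_of_nnreal _ _).ne]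
    rw [he]
    exact (hcont ⟨fun r => (hF.apprSeq n r : ℝ), by fun_prop⟩).ennreal_ofReal
  exact .measure_of_isPiSystem_of_isProbabilityMeasure
    (BorelSpace.measurable_eq.trans borel_eq_generateFrom_isClosed) isPiSystem_isClosed hclosed

theorem measure_eq_of_lintegral_oneSubExpNegMul_eq {m₁ m₂ : Measure ℝ≥0∞}
    (h : ∀ l : ℝ, 0 < l → ∫⁻ r, oneSubExpNegMul l r ∂m₁ = ∫⁻ r, oneSubExpNegMul l r ∂m₂)
    (hfin : ∀ l : ℝ, 0 < l → ∫⁻ r, oneSubExpNegMul l r ∂m₁ ≠ ⊤)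
    {A : Set ℝ≥0∞} (hA : MeasurableSet A) (hA0 : A ⊆ Ioi 0) : m₁ A = m₂ A := by
  set W := oneSubExpNegMul 1
  have hmass (m : Measure ℝ≥0∞) : m.withDensity W univ = ∫⁻ r, W r ∂m := by
    rw [withDensity_apply _ MeasurableSet.univ, Measure.restrict_univ]
  have hlaplace (m : Measure ℝ≥0∞) (hm : ∀ l : ℝ, 0 < l → ∫⁻ r, oneSubExpNegMul l r ∂m ≠ ⊤)
      {l : ℝ} (hl : 0 < l) : ∫⁻ r, expNegMul l r ∂m.withDensity W =
        ∫⁻ r, oneSubExpNegMul (l + 1) r ∂m - ∫⁻ r, oneSubExpNegMul l r ∂m := by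
    rw [lintegral_withDensity_eq_lintegral_mul _ (by fun_prop) (by fun_prop)]
    simp_rw [Pi.mul_apply, W, oneSubExpNegMul_one_mul_expNegMul hl.le]
    refine lintegral_sub (by fun_prop) (hm l hl) (ae_of_all _ fun r => ?_)
    have hG : expNegMul (l + 1) r ≤ expNegMul l r := by
      rw [expNegMul_add]; exact mul_le_of_le_one_right' (expNegMul_le_one zero_le_one r)
    simpa only [oneSubExpNegMul_eq] using tsub_le_tsub_left hG 1
  have hfin₂ (l : ℝ) (hl : 0 < l) : ∫⁻ r, oneSubExpNegMul l r ∂m₂ ≠ ⊤ := h l hl ▸ hfin l hl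
  have : IsFiniteMeasure (m₁.withDensity W) := ⟨by rw [hmass]; exact (hfin 1 one_pos).lt_top⟩
  have : IsFiniteMeasure (m₂.withDensity W) := ⟨by rw [hmass]; exact (hfin₂ 1 one_pos).lt_top⟩
  have hW : m₁.withDensity W = m₂.withDensity W :=
    ext_of_lintegral_expNegMul_eq (by rw [hmass, hmass, h 1 one_pos]) fun l hl => by
      rw [hlaplace m₁ hfin hl, hlaplace m₂ hfin₂ hl, h l hl, h (l + 1) (by positivity)]
  -- `W` vanishes only at `0`, so `m` is recovered from `m.withDensity W` on `(0,∞]`.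
  have hrecover (m : Measure ℝ≥0∞) : ∫⁻ r in A, (W r)⁻¹ ∂m.withDensity W = m A := by
    rw [setLIntegral_withDensity_eq_setLIntegral_mul _ (by fun_prop) (by fun_prop) hA]
    refine (setLIntegral_congr_fun hA fun r hr => ?_).trans (setLIntegral_one A)
    exact ENNReal.mul_inv_cancel (oneSubExpNegMul_one_pos (hA0 hr)).ne'
      (oneSubExpNegMul_ne_top 1 r)
  rw [← hrecover m₁, hW, hrecover m₂]

namespace IsCSBPTransition

variable {u : ℝ → ℝ → ℝ} {p : ℝ → ℝ≥0∞ → Measure ℝ≥0∞}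

lemma lintegral_expNegMul (hp : IsCSBPTransition u p) {t : ℝ} (ht : 0 ≤ t) (x : ℝ≥0∞) {l : ℝ}
    (hl : 0 < l) : ∫⁻ r, expNegMul l r ∂p t x = expNegMul (u t l) x := by
  by_cases hx : x = ⊤
  · simp [hx, hp.2.2 t ht, expNegMul]
  · rw [expNegMul_eq_indicator, lintegral_indicator (measurableSet_singleton ⊤).compl,
      hp.2.1 t ht x hx l hl, expNegMul, if_neg hx, neg_mul_comm, mul_comm]

lemma lintegral_oneSubExpNegMul (hp : IsCSBPTransition u p) {t : ℝ} (ht : 0 ≤ t) (x : ℝ≥0∞)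
    {l : ℝ} (hl : 0 < l) : ∫⁻ r, oneSubExpNegMul l r ∂p t x = oneSubExpNegMul (u t l) x := by
  have := hp.1 t ht x
  simp_rw [oneSubExpNegMul_eq]
  rw [lintegral_sub (by fun_prop) (hp.lintegral_expNegMul ht x hl ▸ expNegMul_ne_top _ _)
    (ae_of_all _ (expNegMul_le_one hl.le)), lintegral_one, measure_univ,
    hp.lintegral_expNegMul ht x hl]

lemma measurable (hp : IsCSBPTransition u p) {t : ℝ} (ht : 0 ≤ t) : Measurable (p t) := by
  have := hp.1 t ht
  refine measurable_of_measurable_lintegral_expNegMul fun l hl => ?_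
  simp_rw [hp.lintegral_expNegMul ht _ hl]
  exact measurable_expNegMul _

end IsCSBPTransition

lemma IsLevyRep.lintegral_oneSubExpNegMul {u : ℝ → ℝ → ℝ} {ν : ℝ → Measure ℝ≥0∞}
    (hν : IsLevyRep u ν) {t l : ℝ} (ht : 0 < t) (hl : 0 < l) :
    ∫⁻ r, oneSubExpNegMul l r ∂ν t = ENNReal.ofReal (u t l) :=
  ((hν t ht).2.2.2 l hl).symm

theorem csbp_cluster_levy_flow_property_general
    (Ψ : ℝ → ℝ) (a b : ℝ) (piM : Measure ℝ) (u : ℝ → ℝ → ℝ)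
    (hbm : IsBranchingMechanism Ψ a b piM)
    (hu : IsFlow Ψ u)
    (p : ℝ → ℝ≥0∞ → Measure ℝ≥0∞) (hp : IsCSBPTransition u p)
    (ν : ℝ → Measure ℝ≥0∞) (hν : IsLevyRep u ν) :
    ∀ s t : ℝ, 0 < s → 0 < t → ∀ A : Set ℝ≥0∞, MeasurableSet A → A ⊆ Set.Ioi 0 →
      ν (t + s) A = ∫⁻ x, p t x A ∂(ν s) := by
  intro s t hs ht A hA hA0
  have hκ : Measurable (p t) := hp.measurable ht.le
  have hlaplace (l : ℝ) (hl : 0 < l) :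
      ∫⁻ r, oneSubExpNegMul l r ∂(ν s).bind (p t) = ENNReal.ofReal (u (t + s) l) := by
    rw [Measure.lintegral_bind hκ.aemeasurable (by fun_prop)]
    simp_rw [hp.lintegral_oneSubExpNegMul ht.le _ hl]
    rw [hν.lintegral_oneSubExpNegMul hs (hu.2.1 l hl t ht.le),
      hu.apply_add hbm.locallyLipschitzOn hl ht.le hs.le]
  rw [← Measure.bind_apply hA hκ.aemeasurable]
  refine measure_eq_of_lintegral_oneSubExpNegMul_eq (fun l hl => ?_) (fun l hl => ?_) hA hA0
  · rw [hlaplace l hl, hν.lintegral_oneSubExpNegMul (by positivity) hl]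
  · rw [hν.lintegral_oneSubExpNegMul (by positivity) hl]
    exact ENNReal.ofReal_ne_top

/-- for a non-linear branching mechanism of infinite variation type, a
flow `u`, a CSBP(Ψ) transition family `p` and Lévy measures `ν_t` representing `u`, one
has `ν_{t+s}(A) = ∫_{(0,∞]} p_t(x,A) ν_s(dx)` for all `s,t > 0` and Borel `A ⊆ (0,∞]`. -/
theorem csbp_cluster_levy_flow_property
    (Ψ : ℝ → ℝ) (a b : ℝ) (piM : Measure ℝ) (u : ℝ → ℝ → ℝ)
    (hbm : IsBranchingMechanism Ψ a b piM) (hnl : IsNonLinear b piM)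
    (hiv : ¬ FiniteVariationType b piM) (hu : IsFlow Ψ u)
    (p : ℝ → ℝ≥0∞ → Measure ℝ≥0∞) (hp : IsCSBPTransition u p)
    (ν : ℝ → Measure ℝ≥0∞) (hν : IsLevyRep u ν) :
    ∀ s t : ℝ, 0 < s → 0 < t → ∀ A : Set ℝ≥0∞, MeasurableSet A → A ⊆ Set.Ioi 0 →
      ν (t + s) A = ∫⁻ x, p t x A ∂(ν s) :=
  csbp_cluster_levy_flow_property_general Ψ a b piM u hbm hu p hp ν hν
end

section
/- Let Ψ be a non-linear branching mechanism with γ := sup{λ ∈ [0,∞) : Ψ(λ) ≤ 0} < ∞, let u be a flow for Ψ, and let (p_t) be a CSBP(Ψ) transition family. Then for all η, δ ∈ (0,1) there exists a > 0 such that for every x ∈ [2η,∞) and every s ∈ [0,a], p_s(x, [0,η]) ≤ δ. -/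
/-!
Chernoff's bound with the Laplace transform `exp(-x u(s,λ))` gives
`p_s(x,[0,η]) ≤ exp(λη - x u(s,λ))`. Take `λ = (1 - log δ)/η`. Since `u(·,λ)` is continuous at
`0` with `u(0,λ) = λ`, for small `s` we have `u(s,λ) ≥ λ - 1/(2η)`, and then for `x ≥ 2η` the
exponent is at most `λη - (2ηλ - 1) = log δ`.
-/

open MeasureTheory Set Filter Topology
open scoped ENNReal NNReal

theorem measure_Iic_ofReal_mul_exp_le_setLIntegral (P : Measure ℝ≥0∞) {l η : ℝ} (hl : 0 ≤ l)
    (hη : 0 ≤ η) :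
    P (Iic (ENNReal.ofReal η)) * ENNReal.ofReal (Real.exp (-l * η)) ≤
      ∫⁻ z in {⊤}ᶜ, ENNReal.ofReal (Real.exp (-l * z.toReal)) ∂P := by
  have hmeas : Measurable fun z : ℝ≥0∞ => ENNReal.ofReal (Real.exp (-l * z.toReal)) := by
    fun_prop
  have hsub : Iic (ENNReal.ofReal η) ⊆ {⊤}ᶜ := fun z hz =>
    (hz.trans_lt ENNReal.ofReal_lt_top).ne
  calc P (Iic (ENNReal.ofReal η)) * ENNReal.ofReal (Real.exp (-l * η))
      = ∫⁻ _ in Iic (ENNReal.ofReal η), ENNReal.ofReal (Real.exp (-l * η)) ∂P := by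
        rw [setLIntegral_const, mul_comm]
    _ ≤ ∫⁻ z in Iic (ENNReal.ofReal η), ENNReal.ofReal (Real.exp (-l * z.toReal)) ∂P := by
        refine setLIntegral_mono hmeas fun z hz => ?_
        have hz : z.toReal ≤ η := ENNReal.toReal_le_of_le_ofReal hη hz
        exact ENNReal.ofReal_le_ofReal (Real.exp_le_exp.mpr (by nlinarith))
    _ ≤ ∫⁻ z in {⊤}ᶜ, ENNReal.ofReal (Real.exp (-l * z.toReal)) ∂P := lintegral_mono_set hsub

theorem IsCSBPTransition.measure_Iic_le_exp {u : ℝ → ℝ → ℝ} {p : ℝ → ℝ≥0∞ → Measure ℝ≥0∞}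
    (hp : IsCSBPTransition u p) {t x l η : ℝ} (ht : 0 ≤ t) (hx : 0 ≤ x) (hl : 0 < l)
    (hη : 0 ≤ η) :
    p t (ENNReal.ofReal x) (Iic (ENNReal.ofReal η)) ≤
      ENNReal.ofReal (Real.exp (l * η - x * u t l)) := by
  have hlap := hp.2.1 t ht (ENNReal.ofReal x) ENNReal.ofReal_ne_top l hl
  rw [ENNReal.toReal_ofReal hx] at hlap
  have hchernoff := measure_Iic_ofReal_mul_exp_le_setLIntegral (p t (ENNReal.ofReal x)) hl.le hη
  rw [hlap,
    ← ENNReal.le_div_iff_mul_le (.inl (by simp [Real.exp_pos])) (.inl ENNReal.ofReal_ne_top),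
    ← ENNReal.ofReal_div_of_pos (Real.exp_pos _), ← Real.exp_sub] at hchernoff
  convert hchernoff using 3
  ring

theorem IsFlow.exists_pos_forall_lt {Ψ : ℝ → ℝ} {u : ℝ → ℝ → ℝ} (hu : IsFlow Ψ u) {l c : ℝ}
    (hl : 0 < l) (hc : c < l) : ∃ a0 > 0, ∀ s, 0 ≤ s → s ≤ a0 → c < u s l := by
  have hcont : ContinuousWithinAt (fun s => u s l) (Ici 0) 0 :=
    (hu.2.2 l hl 0 le_rfl).continuousWithinAt
  have hev : ∀ᶠ s in 𝓝[≥] 0, c < u s l :=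
    hcont.eventually (eventually_gt_nhds (show c < u 0 l by rwa [hu.1 l hl]))
  obtain ⟨b, hb, hbs⟩ := (nhdsGE_basis (0 : ℝ)).mem_iff.mp hev
  exact ⟨b / 2, by positivity, fun s hs hsb => hbs ⟨hs, by linarith⟩⟩

theorem csbp_uniform_escape_from_low_levels_general
    (Ψ : ℝ → ℝ) (u : ℝ → ℝ → ℝ)
    (hu : IsFlow Ψ u)
    (p : ℝ → ℝ≥0∞ → Measure ℝ≥0∞) (hp : IsCSBPTransition u p) :
    ∀ η δ : ℝ, 0 < η → η < 1 → 0 < δ → δ < 1 →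
      ∃ a0 : ℝ, 0 < a0 ∧ ∀ x : ℝ, 2 * η ≤ x → ∀ s : ℝ, 0 ≤ s → s ≤ a0 →
        p s (ENNReal.ofReal x) (Set.Iic (ENNReal.ofReal η)) ≤ ENNReal.ofReal δ := by
  intro η δ hη _ hδ hδ1
  set l := (1 - Real.log δ) / η
  have hlη : l * η = 1 - Real.log δ := div_mul_cancel₀ _ hη.ne'
  have hlogδ : Real.log δ < 0 := Real.log_neg hδ hδ1
  have hl : 0 < l := div_pos (by linarith) hη
  obtain ⟨a0, ha0, hlow⟩ := hu.exists_pos_forall_lt hl (c := l - 1 / (2 * η)) (by simp [hη])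
  refine ⟨a0, ha0, fun x hx s hs hsa => ?_⟩
  have hus : l - 1 / (2 * η) < u s l := hlow s hs hsa
  have hexponent : l * η - x * u s l ≤ Real.log δ := by
    have hhalf : 2 * η * (1 / (2 * η)) = 1 := by field_simp
    have hpos : 0 < u s l := by nlinarith
    nlinarith [mul_le_mul_of_nonneg_right hx hpos.le]
  calc p s (ENNReal.ofReal x) (Iic (ENNReal.ofReal η))
      ≤ ENNReal.ofReal (Real.exp (l * η - x * u s l)) :=
        hp.measure_Iic_le_exp hs (by linarith) hl hη.le
    _ ≤ ENNReal.ofReal δ := by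
        gcongr
        exact (Real.exp_le_exp.mpr hexponent).trans_eq (Real.exp_log hδ)

/-- for a non-linear branching mechanism `Ψ` with
`γ = sup{λ ≥ 0 : Ψ(λ) ≤ 0} < ∞` (i.e. the set is bounded above), a flow `u` and a
CSBP(Ψ) transition family `p`: for all `η, δ ∈ (0,1)` there exists `a > 0` such that
`p_s(x,[0,η]) ≤ δ` for every `x ≥ 2η` and every `s ∈ [0,a]`. -/
theorem csbp_uniform_escape_from_low_levels
    (Ψ : ℝ → ℝ) (a b : ℝ) (piM : Measure ℝ) (u : ℝ → ℝ → ℝ)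
    (hbm : IsBranchingMechanism Ψ a b piM) (hnl : IsNonLinear b piM)
    (hγ : BddAbove {l : ℝ | 0 ≤ l ∧ Ψ l ≤ 0}) (hu : IsFlow Ψ u)
    (p : ℝ → ℝ≥0∞ → Measure ℝ≥0∞) (hp : IsCSBPTransition u p) :
    ∀ η δ : ℝ, 0 < η → η < 1 → 0 < δ → δ < 1 →
      ∃ a0 : ℝ, 0 < a0 ∧ ∀ x : ℝ, 2 * η ≤ x → ∀ s : ℝ, 0 ≤ s → s ≤ a0 →
        p s (ENNReal.ofReal x) (Set.Iic (ENNReal.ofReal η)) ≤ ENNReal.ofReal δ :=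
  csbp_uniform_escape_from_low_levels_general Ψ u hu p hp
end

section
/- Let Ψ be a non-linear branching mechanism of finite variation type with Ψ′(0+) := lim_{λ→0+} Ψ(λ)/λ ∈ [0,∞) (so Ψ > 0 on (0,∞) and D ∈ (0,∞)). Fix θ, θ′ ∈ (0,∞) and let g_θ, g_{θ′} : [0,∞) → (0,∞) satisfy ∫_{θ}^{g_θ(t)} dλ/Ψ(λ) = t and ∫_{θ′}^{g_{θ′}(t)} dλ/Ψ(λ) = t for all t ≥ 0. Then g_θ(t) → ∞ as t → ∞, and g_θ(t)/g_{θ′}(t) → exp( D ∫_{θ′}^{θ} dλ/Ψ(λ) ) as t → ∞. -/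
open MeasureTheory Set Filter Topology
open scoped ENNReal NNReal

open Real

lemma one_sub_exp_neg_le_min (x : ℝ) : 1 - exp (-x) ≤ min x 1 :=
  le_min (by linarith [add_one_le_exp (-x)]) (by linarith [exp_pos (-x)])

lemma one_sub_exp_neg_nonneg {x : ℝ} (hx : 0 ≤ x) : 0 ≤ 1 - exp (-x) :=
  sub_nonneg.2 (exp_le_one_iff.2 (neg_nonpos.2 hx))

lemma one_sub_exp_neg_mul_le (l : ℝ) {r : ℝ} (hr : 0 ≤ r) :
    1 - exp (-(l * r)) ≤ max l 1 * min r 1 := by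
  refine (one_sub_exp_neg_le_min _).trans ?_
  rcases le_total r 1 with h | h
  · rw [min_eq_left h]
    exact (min_le_left _ _).trans (mul_le_mul_of_nonneg_right (le_max_left _ _) hr)
  · rw [min_eq_right h, mul_one]
    exact (min_le_right _ _).trans (le_max_right _ _)

lemma strictAntiOn_one_sub_exp_neg_div : StrictAntiOn (fun x => (1 - exp (-x)) / x) (Ioi 0) := by
  rintro x (hx : 0 < x) y - hxy
  -- secants of the strictly convex `exp` through `0`, taken at `-y < -x`
  have h := strictConvexOn_exp.secant_strict_mono (mem_univ 0) (mem_univ (-y)) (mem_univ (-x))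
    (by linarith) (by linarith) (neg_lt_neg hxy)
  simp only [exp_zero, sub_zero, div_neg] at h
  have e : ∀ z : ℝ, (1 - exp (-z)) / z = -((exp (-z) - 1) / z) := fun z => by ring
  simp only [e]
  exact h

lemma strictAntiOn_one_sub_exp_neg_mul_div {r : ℝ} (hr : 0 < r) :
    StrictAntiOn (fun l => (1 - exp (-(l * r))) / l) (Ioi 0) := by
  rintro x (hx : 0 < x) y (hy : 0 < y) hxy
  have e : ∀ l : ℝ, 0 < l → (1 - exp (-(l * r))) / l = r * ((1 - exp (-(l * r))) / (l * r)) :=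
    fun l hl => by field_simp
  simp only [e x hx, e y hy]
  exact mul_lt_mul_of_pos_left (strictAntiOn_one_sub_exp_neg_div (mul_pos hx hr) (mul_pos hy hr)
    (mul_lt_mul_of_pos_right hxy hr)) hr

lemma StrictMonoOn.lt_of_tendsto_nhdsGT {f : ℝ → ℝ} {a c x : ℝ} (hf : StrictMonoOn f (Ioi a))
    (hc : Tendsto f (𝓝[>] a) (𝓝 c)) (hx : a < x) : c < f x := by
  obtain ⟨y, hay, hyx⟩ := exists_between hx
  have hcy : c ≤ f y := le_of_tendsto hc <| by
    filter_upwards [Ioo_mem_nhdsGT hay] with z hz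
    exact (hf hz.1 hay hz.2).le
  exact hcy.trans_lt (hf hay hx hyx)

lemma integral_pos_of_ae_pos {α : Type*} [MeasurableSpace α] {μ : Measure α} {f : α → ℝ}
    (hf : ∀ᵐ x ∂μ, 0 < f x) (hi : Integrable f μ) (hne : μ ≠ 0) : 0 < ∫ x, f x ∂μ := by
  refine (integral_pos_iff_support_of_nonneg_ae (hf.mono fun x hx => hx.le) hi).2 ?_
  have hsupp : ∀ᵐ x ∂μ, x ∈ Function.support f := hf.mono fun x hx => hx.ne'
  rw [show μ (Function.support f) = μ univ from measure_of_measure_compl_eq_zero hsupp]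
  exact Measure.measure_univ_pos.2 hne

noncomputable def jumpSlope (μ : Measure ℝ) (l : ℝ) : ℝ :=
  ∫ r, (1 - exp (-(l * r))) / l ∂μ

section JumpSlope

variable {μ : Measure ℝ}

lemma integrable_one_sub_exp_neg_mul (hpos : ∀ᵐ r ∂μ, 0 < r)
    (hμ : Integrable (fun r => min r 1) μ) {l : ℝ} (hl : 0 ≤ l) :
    Integrable (fun r => 1 - exp (-(l * r))) μ := by
  refine (hμ.const_mul (max l 1)).mono' (by fun_prop) ?_
  filter_upwards [hpos] with r hr
  rw [Real.norm_eq_abs, abs_of_nonneg (one_sub_exp_neg_nonneg (mul_nonneg hl hr.le))]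
  exact one_sub_exp_neg_mul_le l hr.le

lemma jumpSlope_strictAntiOn (hpos : ∀ᵐ r ∂μ, 0 < r) (hμ : Integrable (fun r => min r 1) μ)
    (hne : μ ≠ 0) : StrictAntiOn (jumpSlope μ) (Ioi 0) := by
  intro x hx y hy hxy
  have hint : ∀ l : ℝ, 0 < l → Integrable (fun r => (1 - exp (-(l * r))) / l) μ :=
    fun l hl => (integrable_one_sub_exp_neg_mul hpos hμ hl.le).div_const l
  rw [jumpSlope, jumpSlope, ← sub_pos, ← integral_sub (hint x hx) (hint y hy)]
  refine integral_pos_of_ae_pos ?_ ((hint x hx).sub (hint y hy)) hne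
  filter_upwards [hpos] with r hr
  exact sub_pos.2 (strictAntiOn_one_sub_exp_neg_mul_div hr hx hy hxy)

lemma tendsto_jumpSlope_atTop (hpos : ∀ᵐ r ∂μ, 0 < r) (hμ : Integrable (fun r => min r 1) μ) :
    Tendsto (jumpSlope μ) atTop (𝓝 0) := by
  have hdom : ∀ᶠ l in atTop, ∀ᵐ r ∂μ, ‖(1 - exp (-(l * r))) / l‖ ≤ min r 1 := by
    filter_upwards [eventually_ge_atTop 1] with l hl
    filter_upwards [hpos] with r hr
    have hl0 : 0 < l := one_pos.trans_le hl
    rw [Real.norm_eq_abs,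
      abs_of_nonneg (div_nonneg (one_sub_exp_neg_nonneg (by positivity)) hl0.le), div_le_iff₀' hl0]
    simpa only [max_eq_left hl] using one_sub_exp_neg_mul_le l hr.le
  have hlim : ∀ᵐ r ∂μ, Tendsto (fun l => (1 - exp (-(l * r))) / l) atTop (𝓝 0) := by
    filter_upwards [hpos] with r hr
    refine squeeze_zero' ?_ ?_ tendsto_inv_atTop_zero
    · filter_upwards [eventually_gt_atTop 0] with l hl
      exact div_nonneg (one_sub_exp_neg_nonneg (by positivity)) hl.le
    · filter_upwards [eventually_gt_atTop 0] with l hl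
      rw [← one_div]
      exact div_le_div_of_nonneg_right ((one_sub_exp_neg_le_min _).trans (min_le_right _ _)) hl.le
  have h := tendsto_integral_filter_of_dominated_convergence _
    (Eventually.of_forall fun l => by fun_prop) hdom hμ hlim
  rwa [integral_zero] at h

end JumpSlope

section BackwardFlow

variable {F : ℝ → ℝ}

lemma intervalIntegrable_inv_of_monotoneOn (hpos : ∀ l, 0 < l → 0 < F l)
    (hmono : MonotoneOn F (Ioi 0)) {p q : ℝ} (hp : 0 < p) (hq : 0 < q) :
    IntervalIntegrable (fun l => (F l)⁻¹) volume p q := by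
  have hsub : uIcc p q ⊆ Ioi 0 := fun l hl => (lt_min hp hq).trans_le hl.1
  refine AntitoneOn.intervalIntegrable fun x hx y hy hxy => ?_
  exact inv_anti₀ (hpos x (hsub hx)) (hmono (hsub hx) (hsub hy) hxy)

lemma tendsto_atTop_of_integral_inv_eq (hpos : ∀ l, 0 < l → 0 < F l)
    (hint : ∀ p q, 0 < p → 0 < q → IntervalIntegrable (fun l => (F l)⁻¹) volume p q)
    {θ : ℝ} (hθ : 0 < θ) {g : ℝ → ℝ} (hg : ∀ t, 0 ≤ t → 0 < g t)
    (hgeq : ∀ t, 0 ≤ t → ∫ l in θ..g t, (F l)⁻¹ = t) : Tendsto g atTop atTop := by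
  refine tendsto_atTop.2 fun M => ?_
  set M' := max M θ
  have hM' : 0 < M' := hθ.trans_le (le_max_right _ _)
  filter_upwards [eventually_gt_atTop (max (∫ l in θ..M', (F l)⁻¹) 0)] with t ht
  obtain ⟨htM, ht0⟩ := max_lt_iff.1 ht
  by_contra! hlt
  have hsplit := intervalIntegral.integral_add_adjacent_intervals
    (hint θ (g t) hθ (hg t ht0.le)) (hint (g t) M' (hg t ht0.le) hM')
  have hrest : 0 ≤ ∫ l in g t..M', (F l)⁻¹ :=
    intervalIntegral.integral_nonneg (hlt.le.trans (le_max_left _ _))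
      fun l hl => (inv_pos.2 (hpos l ((hg t ht0.le).trans_le hl.1))).le
  rw [hgeq t ht0.le] at hsplit
  linarith

lemma abs_log_div_sub_mul_integral_inv_le (hpos : ∀ l, 0 < l → 0 < F l)
    (hint : ∀ p q, 0 < p → 0 < q → IntervalIntegrable (fun l => (F l)⁻¹) volume p q)
    {D ε L x y : ℝ} (hL : 0 < L) (hε : ∀ l, L ≤ l → |F l / l - D| ≤ ε) (hx : L ≤ x) (hy : L ≤ y) :
    |log (y / x) - D * ∫ l in x..y, (F l)⁻¹| ≤ ε * |∫ l in x..y, (F l)⁻¹| := by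
  have hx0 := hL.trans_le hx
  have hy0 := hL.trans_le hy
  have h0 : (0 : ℝ) ∉ uIcc x y := notMem_uIcc_of_lt hx0 hy0
  have hε0 : 0 ≤ ε := (abs_nonneg _).trans (hε L le_rfl)
  rw [← integral_inv h0, ← intervalIntegral.integral_const_mul,
    ← intervalIntegral.integral_sub (intervalIntegrable_inv_iff.2 (Or.inr h0))
      ((hint x y hx0 hy0).const_mul D),
    ← abs_of_nonneg hε0, ← abs_mul, ← intervalIntegral.integral_const_mul]
  refine (Real.norm_eq_abs _).symm.trans_le (intervalIntegral.norm_integral_le_abs_of_norm_le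
    (f := fun l => l⁻¹ - D * (F l)⁻¹) ?_ ((hint x y hx0 hy0).const_mul _))
  rw [ae_restrict_iff' measurableSet_uIoc]
  refine ae_of_all _ fun l hl => ?_
  have hLl : L ≤ l := (le_min hx hy).trans hl.1.le
  have hFl := hpos l (hL.trans_le hLl)
  calc ‖l⁻¹ - D * (F l)⁻¹‖ = ‖(F l / l - D) * (F l)⁻¹‖ := by
        congr 1
        field_simp
    _ = |F l / l - D| * (F l)⁻¹ := by rw [Real.norm_eq_abs, abs_mul, abs_of_pos (inv_pos.2 hFl)]
    _ ≤ ε * (F l)⁻¹ := mul_le_mul_of_nonneg_right (hε l hLl) (inv_nonneg.2 hFl.le)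

theorem tendsto_div_of_integral_inv_eq (hpos : ∀ l, 0 < l → 0 < F l)
    (hint : ∀ p q, 0 < p → 0 < q → IntervalIntegrable (fun l => (F l)⁻¹) volume p q)
    {D S : ℝ} (hD : Tendsto (fun l => F l / l) atTop (𝓝 D)) {g g' : ℝ → ℝ}
    (hg : Tendsto g atTop atTop) (hg' : Tendsto g' atTop atTop)
    (hS : ∀ᶠ t in atTop, ∫ l in g' t..g t, (F l)⁻¹ = S) :
    Tendsto (fun t => g t / g' t) atTop (𝓝 (exp (D * S))) := by
  have hlog : Tendsto (fun t => log (g t / g' t)) atTop (𝓝 (D * S)) := by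
    refine Metric.tendsto_nhds.2 fun ε hε => ?_
    set δ := ε / (|S| + 1)
    have hδ : 0 < δ := by positivity
    obtain ⟨L, hL⟩ :=
      eventually_atTop.1 ((Metric.tendsto_nhds.1 hD δ hδ).and (eventually_gt_atTop 0))
    filter_upwards [hg.eventually_ge_atTop L, hg'.eventually_ge_atTop L, hS] with t hgt hgt' hSt
    have hbound := abs_log_div_sub_mul_integral_inv_le hpos hint (hL L le_rfl).2
      (fun l hl => (Real.dist_eq _ _ ▸ (hL l hl).1).le) hgt' hgt
    rw [hSt] at hbound
    calc dist (log (g t / g' t)) (D * S) ≤ δ * |S| := hbound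
      _ < δ * (|S| + 1) := mul_lt_mul_of_pos_left (lt_add_one _) hδ
      _ = ε := div_mul_cancel₀ _ (by positivity)
  refine hlog.rexp.congr' ?_
  filter_upwards [hg.eventually_gt_atTop 0, hg'.eventually_gt_atTop 0] with t h h'
  exact exp_log (div_pos h h')

end BackwardFlow

section BranchingMechanism

variable {Ψ : ℝ → ℝ} {a b : ℝ} {piM : Measure ℝ}

lemma IsBranchingMechanism.ae_pos (hbm : IsBranchingMechanism Ψ a b piM) : ∀ᵐ r ∂piM, 0 < r :=
  mem_ae_iff.2 hbm.2.1

lemma FiniteVariationType.integrable_min_one (hbm : IsBranchingMechanism Ψ a b piM)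
    (hfv : FiniteVariationType b piM) : Integrable (fun r => min r 1) piM := by
  refine ⟨by fun_prop, ?_⟩
  rw [hasFiniteIntegral_iff_ofReal (hbm.ae_pos.mono fun r hr => le_min hr.le zero_le_one)]
  have hle : ∀ᵐ r ∂piM, ENNReal.ofReal (min r 1) ≤
      (Ioo 0 1).indicator (fun r => ENNReal.ofReal r) r + ENNReal.ofReal (min 1 (r ^ 2)) := by
    filter_upwards [hbm.ae_pos] with r hr
    rcases lt_or_ge r 1 with h | h
    · rw [indicator_of_mem (show r ∈ Ioo 0 1 from ⟨hr, h⟩), min_eq_left h.le]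
      exact le_self_add
    · rw [min_eq_right h, min_eq_left (one_le_pow₀ h)]
      exact le_add_self
  calc ∫⁻ r, ENNReal.ofReal (min r 1) ∂piM
      ≤ ∫⁻ r, (Ioo 0 1).indicator (fun r => ENNReal.ofReal r) r
          + ENNReal.ofReal (min 1 (r ^ 2)) ∂piM := lintegral_mono_ae hle
    _ = (∫⁻ r in Ioo 0 1, ENNReal.ofReal r ∂piM) + ∫⁻ r, ENNReal.ofReal (min 1 (r ^ 2)) ∂piM := by
      rw [lintegral_add_left (ENNReal.measurable_ofReal.indicator measurableSet_Ioo),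
        lintegral_indicator measurableSet_Ioo]
    _ < ⊤ := ENNReal.add_lt_top.2 ⟨hfv.2, hbm.2.2.1⟩

lemma IsBranchingMechanism.div_eq (hbm : IsBranchingMechanism Ψ a b piM)
    (hfv : FiniteVariationType b piM) {l : ℝ} (hl : 0 < l) :
    Ψ l / l = Dconst a piM - jumpSlope piM l := by
  have hmin := hfv.integrable_min_one hbm
  have htrunc :
      (fun r => if r < 1 then l * r else 0) =ᵐ[piM] (Ioo 0 1).indicator (fun r => l * r) := by
    filter_upwards [hbm.ae_pos] with r hr
    by_cases h : r < 1
    · rw [if_pos h, indicator_of_mem (show r ∈ Ioo 0 1 from ⟨hr, h⟩)]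
    · rw [if_neg h, indicator_of_notMem fun hr' => h hr'.2]
  have hid : IntegrableOn (fun r => r) (Ioo 0 1) piM :=
    hmin.integrableOn.congr_fun (fun r hr => min_eq_left hr.2.le) measurableSet_Ioo
  have hint_trunc : Integrable (fun r => if r < 1 then l * r else 0) piM :=
    (IntegrableOn.integrable_indicator (Integrable.const_mul hid l) measurableSet_Ioo).congr
      htrunc.symm
  have hexp := integrable_one_sub_exp_neg_mul hbm.ae_pos hmin hl.le
  have hΨ : Ψ l = a * l + l * (∫ r in Ioo 0 1, r ∂piM) - ∫ r, 1 - exp (-(l * r)) ∂piM := by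
    rw [hbm.2.2.2 l hl.le, psiShape, hfv.1, zero_mul, add_zero, add_sub_assoc,
      ← integral_const_mul, ← integral_indicator measurableSet_Ioo, ← integral_congr_ae htrunc,
      ← integral_sub hint_trunc hexp]
    congr 1
    refine integral_congr_ae (ae_of_all _ fun r => ?_)
    simp only [neg_mul]
    ring
  rw [hΨ, Dconst, jumpSlope, integral_div]
  field_simp

lemma IsBranchingMechanism.strictMonoOn_div (hbm : IsBranchingMechanism Ψ a b piM)
    (hnl : IsNonLinear b piM) (hfv : FiniteVariationType b piM) :
    StrictMonoOn (fun l => Ψ l / l) (Ioi 0) := by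
  have hne : piM ≠ 0 := hnl.resolve_left (hfv.1 ▸ lt_irrefl _)
  intro x hx y hy hxy
  simp only [hbm.div_eq hfv hx, hbm.div_eq hfv hy]
  exact sub_lt_sub_left
    (jumpSlope_strictAntiOn hbm.ae_pos (hfv.integrable_min_one hbm) hne hx hy hxy) _

lemma IsBranchingMechanism.tendsto_div_atTop (hbm : IsBranchingMechanism Ψ a b piM)
    (hfv : FiniteVariationType b piM) :
    Tendsto (fun l => Ψ l / l) atTop (𝓝 (Dconst a piM)) := by
  have h := (tendsto_jumpSlope_atTop hbm.ae_pos (hfv.integrable_min_one hbm)).const_sub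
    (Dconst a piM)
  rw [sub_zero] at h
  exact h.congr' (eventually_gt_atTop 0 |>.mono fun l hl => (hbm.div_eq hfv hl).symm)

lemma IsBranchingMechanism.pos (hbm : IsBranchingMechanism Ψ a b piM) (hnl : IsNonLinear b piM)
    (hfv : FiniteVariationType b piM) {c : ℝ} (hc : 0 ≤ c)
    (hder : Tendsto (fun l => Ψ l / l) (𝓝[>] 0) (𝓝 c)) {l : ℝ} (hl : 0 < l) : 0 < Ψ l := by
  have h := hc.trans_lt ((hbm.strictMonoOn_div hnl hfv).lt_of_tendsto_nhdsGT hder hl)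
  exact div_mul_cancel₀ (Ψ l) hl.ne' ▸ mul_pos h hl

lemma IsBranchingMechanism.monotoneOn (hbm : IsBranchingMechanism Ψ a b piM)
    (hnl : IsNonLinear b piM) (hfv : FiniteVariationType b piM) {c : ℝ} (hc : 0 ≤ c)
    (hder : Tendsto (fun l => Ψ l / l) (𝓝[>] 0) (𝓝 c)) : MonotoneOn Ψ (Ioi 0) := by
  have h := (hbm.strictMonoOn_div hnl hfv).monotoneOn.mul monotoneOn_id
    (fun l hl => div_nonneg (hbm.pos hnl hfv hc hder hl).le (le_of_lt hl)) fun l hl => le_of_lt hl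
  exact h.congr fun l hl => div_mul_cancel₀ _ (ne_of_gt hl)

end BranchingMechanism

/-- let `Ψ` be a non-linear branching mechanism of finite variation type
with `Ψ′(0+) = c ∈ [0,∞)`. Fix `θ, θ′ > 0` and let `g_θ, g_{θ′} : [0,∞) → (0,∞)`
satisfy `∫_{θ}^{g_θ(t)} dλ/Ψ(λ) = t` (and similarly for `θ′`). Then `g_θ(t) → ∞`
and `g_θ(t)/g_{θ′}(t) → exp(D ∫_{θ′}^{θ} dλ/Ψ(λ))` as `t → ∞`. -/
theorem csbp_grey_backward_flow_ratio_subcritical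
    (Ψ : ℝ → ℝ) (a b : ℝ) (piM : Measure ℝ)
    (hbm : IsBranchingMechanism Ψ a b piM) (hnl : IsNonLinear b piM)
    (hfv : FiniteVariationType b piM)
    (c : ℝ) (hc : 0 ≤ c) (hder : Tendsto (fun l => Ψ l / l) (𝓝[>] 0) (𝓝 c))
    (θ θ' : ℝ) (hθ : 0 < θ) (hθ' : 0 < θ')
    (g g' : ℝ → ℝ)
    (hg : ∀ t : ℝ, 0 ≤ t → 0 < g t) (hg' : ∀ t : ℝ, 0 ≤ t → 0 < g' t)
    (hgeq : ∀ t : ℝ, 0 ≤ t → (∫ l in θ..(g t), (Ψ l)⁻¹) = t)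
    (hg'eq : ∀ t : ℝ, 0 ≤ t → (∫ l in θ'..(g' t), (Ψ l)⁻¹) = t) :
    Tendsto g atTop atTop ∧
      Tendsto (fun t => g t / g' t) atTop
        (𝓝 (Real.exp (Dconst a piM * ∫ l in θ'..θ, (Ψ l)⁻¹))) := by
  have hpos : ∀ l, 0 < l → 0 < Ψ l := fun l => hbm.pos hnl hfv hc hder
  have hint : ∀ p q, 0 < p → 0 < q → IntervalIntegrable (fun l => (Ψ l)⁻¹) volume p q :=
    fun p q => intervalIntegrable_inv_of_monotoneOn hpos (hbm.monotoneOn hnl hfv hc hder)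
  have hg_top := tendsto_atTop_of_integral_inv_eq hpos hint hθ hg hgeq
  refine ⟨hg_top, tendsto_div_of_integral_inv_eq hpos hint (hbm.tendsto_div_atTop hfv) hg_top
    (tendsto_atTop_of_integral_inv_eq hpos hint hθ' hg' hg'eq) ?_⟩
  filter_upwards [eventually_ge_atTop 0] with t ht
  have h := intervalIntegral.integral_interval_sub_interval_comm' (hint θ (g t) hθ (hg t ht))
    (hint θ' (g' t) hθ' (hg' t ht)) (hint θ θ' hθ hθ')
  rw [hgeq t ht, hg'eq t ht, sub_self] at h
  linarith
end
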